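/- For all complex numbers a, b, c, t with r(t) = t − c ≠ 0 and p(t)² ≠ r(t)⁴, setting u = p(t)/r(t)², the fiber of X_{a,b,c} at t and the fiber of the Seiberg–Witten curve X_SW at u are smooth elliptic curves with the same j-invariant: writing ĝ₂ = p(t)²/3 − r(t)⁴/4, ĝ₃ = p(t)(8p(t)² − 9r(t)⁴)/216, ĝ₂^SW = u²/3 − 1/4, ĝ₃^SW = u(8u² − 9)/216, one has ĝ₂³ − 27ĝ₃² ≠ 0, (ĝ₂^SW)³ − 27(ĝ₃^SW)² ≠ 0, and ĝ₂³/(ĝ₂³ − 27ĝ₃²) = (ĝ₂^SW)³/((ĝ₂^SW)³ − 27(ĝ₃^SW)²). -/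
import Mathlib


/-- For `r = t − c ≠ 0` and `p² ≠ r⁴`, setting `u = p/r²`, the fiber of
`X_{a,b,c}` at `t` and the fiber of the Seiberg–Witten curve `X_SW` at `u`
are smooth elliptic curves with the same j-invariant: with
`ĝ₂ = p²/3 − r⁴/4`, `ĝ₃ = p(8p² − 9r⁴)/216`, `ĝ₂^SW = u²/3 − 1/4`,
`ĝ₃^SW = u(8u² − 9)/216`, the discriminants are nonzero and
`ĝ₂³/(ĝ₂³ − 27ĝ₃²) = (ĝ₂^SW)³/((ĝ₂^SW)³ − 27(ĝ₃^SW)²)`. -/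
theorem same_j_invariant (a b c t : ℂ)
    (p r u : ℂ) (hp : p = 4 * t ^ 3 - 3 * a * t - b) (hr : r = t - c)
    (hrne : r ≠ 0) (hsm : p ^ 2 ≠ r ^ 4) (hu : u = p / r ^ 2)
    (g2 g3 g2SW g3SW : ℂ)
    (hg2 : g2 = p ^ 2 / 3 - r ^ 4 / 4)
    (hg3 : g3 = p * (8 * p ^ 2 - 9 * r ^ 4) / 216)
    (hg2SW : g2SW = u ^ 2 / 3 - 1 / 4)
    (hg3SW : g3SW = u * (8 * u ^ 2 - 9) / 216) :
    g2 ^ 3 - 27 * g3 ^ 2 ≠ 0 ∧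
    g2SW ^ 3 - 27 * g3SW ^ 2 ≠ 0 ∧
    g2 ^ 3 / (g2 ^ 3 - 27 * g3 ^ 2) = g2SW ^ 3 / (g2SW ^ 3 - 27 * g3SW ^ 2) := by
  have hr2 : (r : ℂ) ^ 2 ≠ 0 := pow_ne_zero _ hrne
  have hpu : p = u * r ^ 2 := by
    rw [hu]; field_simp
  -- u² ≠ 1
  have hu2 : u ^ 2 - 1 ≠ 0 := by
    intro h
    apply hsm
    have hu1 : u ^ 2 = 1 := by linear_combination h
    calc p ^ 2 = u ^ 2 * r ^ 4 := by rw [hpu]; ring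
      _ = r ^ 4 := by rw [hu1]; ring
  -- SW discriminant
  have hDSW : g2SW ^ 3 - 27 * g3SW ^ 2 = (u ^ 2 - 1) / 64 := by
    rw [hg2SW, hg3SW]; ring
  have hDSWne : g2SW ^ 3 - 27 * g3SW ^ 2 ≠ 0 := by
    rw [hDSW]
    exact div_ne_zero hu2 (by norm_num)
  -- scaling relations
  have h2 : g2 = r ^ 4 * g2SW := by rw [hg2, hg2SW, hpu]; ring
  have h3 : g3 = r ^ 6 * g3SW := by rw [hg3, hg3SW, hpu]; ring
  have hD : g2 ^ 3 - 27 * g3 ^ 2 = r ^ 12 * (g2SW ^ 3 - 27 * g3SW ^ 2) := by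
    rw [h2, h3]; ring
  have hr12 : (r : ℂ) ^ 12 ≠ 0 := pow_ne_zero _ hrne
  refine ⟨by rw [hD]; exact mul_ne_zero hr12 hDSWne, hDSWne, ?_⟩
  rw [hD, h2]
  rw [show ((r:ℂ)^4*g2SW)^3 = r^12 * g2SW^3 from by ring, mul_div_mul_left _ _ hr12]
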